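/- arXiv:2509.22284 — 3 statements merged into one kernel-verified Lean document; each statement's English description precedes it below -/
import Mathlib

section
/- (System stability under PD parametrization.) Let ε ∈ (0,1] and B ≥ 0. Let (A_t)_{t≥1} be a sequence of matrices in H^{N×N} with ‖A_t‖_max ≤ 1 − ε for all t, let (b_t)_{t≥1} be vectors in ℂ^N with ‖b_t‖₂ ≤ B for all t, and let x_0 ∈ ℂ^N with ‖x_0‖₂ ≤ B. Define the state sequence by the recurrence x_t = A_t x_{t−1} + b_t. Then for every t ≥ 0, ‖x_t‖₂ ≤ √N · B / ε. -/
/-!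
The ℓ¹ norm `∑ i, ‖x i‖` is the natural Lyapunov function: a matrix with a single nonzero entry
per column and entries of modulus at most `1 - ε` has column sums at most `1 - ε`, so it
contracts the ℓ¹ norm by `1 - ε`. The inputs have ℓ¹ norm at most `√N · B`, hence the ℓ¹ norm
of the state never exceeds the fixed point `√N · B / ε` of `u ↦ (1 - ε) u + √N · B`, and the
Euclidean norm is dominated by the ℓ¹ norm.
-/

/-- The max-entry norm of a complex matrix: the maximum of the absolute values
of its entries (zero for the empty matrix). -/
noncomputable def maxNorm {N : ℕ} (A : Matrix (Fin N) (Fin N) ℂ) : ℝ :=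
  ((Finset.univ.sup fun p : Fin N × Fin N => ‖A p.1 p.2‖₊ : NNReal) : ℝ)

/-- The Euclidean (ℓ²) norm on `ℂ^N`. -/
noncomputable def euclNorm {N : ℕ} (x : Fin N → ℂ) : ℝ :=
  Real.sqrt (∑ i, ‖x i‖ ^ 2)

open Finset Matrix

section

variable {N : ℕ}

lemma euclNorm_nonneg (x : Fin N → ℂ) : 0 ≤ euclNorm x := Real.sqrt_nonneg _

lemma euclNorm_le_sum_norm (x : Fin N → ℂ) : euclNorm x ≤ ∑ i, ‖x i‖ :=
  (Real.sqrt_le_left (sum_nonneg fun _ _ => norm_nonneg _)).2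
    (sum_sq_le_sq_sum_of_nonneg fun _ _ => norm_nonneg _)

lemma sum_norm_le_sqrt_mul_euclNorm (x : Fin N → ℂ) :
    ∑ i, ‖x i‖ ≤ Real.sqrt N * euclNorm x := by
  rw [euclNorm, ← Real.sqrt_mul (Nat.cast_nonneg N)]
  refine (Real.le_sqrt (sum_nonneg fun _ _ => norm_nonneg _) (by positivity)).2 ?_
  simpa using sq_sum_le_card_mul_sum_sq (s := univ) (f := fun i => ‖x i‖)

lemma norm_entry_le_maxNorm (A : Matrix (Fin N) (Fin N) ℂ) (i j : Fin N) :
    ‖A i j‖ ≤ maxNorm A :=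
  NNReal.coe_le_coe.2 (le_sup (f := fun p : Fin N × Fin N => ‖A p.1 p.2‖₊) (mem_univ (i, j)))

lemma sum_norm_col_le_maxNorm {A : Matrix (Fin N) (Fin N) ℂ} {j : Fin N}
    (hj : ∃! i, A i j ≠ 0) : ∑ i, ‖A i j‖ ≤ maxNorm A := by
  obtain ⟨i₀, -, hi₀⟩ := hj
  have hzero : ∀ i ∈ univ, i ≠ i₀ → ‖A i j‖ = 0 := fun i _ hne =>
    norm_eq_zero.2 (not_not.1 fun h => hne (hi₀ i h))
  rw [sum_eq_single_of_mem i₀ (mem_univ _) hzero]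
  exact norm_entry_le_maxNorm A i₀ j

end

lemma sum_norm_mulVec_le {m n R : Type*} [Fintype m] [Fintype n] [NormedRing R]
    {M : Matrix m n R} {c : ℝ} (hM : ∀ j, ∑ i, ‖M i j‖ ≤ c) (x : n → R) :
    ∑ i, ‖(M *ᵥ x) i‖ ≤ c * ∑ j, ‖x j‖ :=
  calc ∑ i, ‖(M *ᵥ x) i‖ ≤ ∑ i, ∑ j, ‖M i j‖ * ‖x j‖ :=
        sum_le_sum fun i _ => (norm_sum_le _ _).trans (sum_le_sum fun j _ => norm_mul_le _ _)
    _ = ∑ j, (∑ i, ‖M i j‖) * ‖x j‖ := by simp only [sum_mul]; exact sum_comm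
    _ ≤ ∑ j, c * ‖x j‖ := sum_le_sum fun j _ => mul_le_mul_of_nonneg_right (hM j) (norm_nonneg _)
    _ = c * ∑ j, ‖x j‖ := (mul_sum _ _ _).symm

lemma sum_norm_add_le {ι E : Type*} [Fintype ι] [SeminormedAddCommGroup E] (v w : ι → E) :
    ∑ i, ‖(v + w) i‖ ≤ ∑ i, ‖v i‖ + ∑ i, ‖w i‖ :=
  (sum_le_sum fun i _ => norm_add_le (v i) (w i)).trans_eq sum_add_distrib

lemma forall_le_of_le_mul_add {u : ℕ → ℝ} {r c K : ℝ} (hr : 0 ≤ r) (hK : r * K + c ≤ K)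
    (h0 : u 0 ≤ K) (hstep : ∀ t, u (t + 1) ≤ r * u t + c) : ∀ t, u t ≤ K
  | 0 => h0
  | t + 1 => (hstep t).trans <| by
      have := forall_le_of_le_mul_add hr hK h0 hstep t
      nlinarith

theorem pd_ssm_bibo_stable_general (N : ℕ) (ε B : ℝ) (hε : ε ∈ Set.Ioc (0 : ℝ) 1)
    (A : ℕ → Matrix (Fin N) (Fin N) ℂ) (b : ℕ → Fin N → ℂ) (x : ℕ → Fin N → ℂ)
    (hH : ∀ t : ℕ, 1 ≤ t → ∀ j : Fin N, ∃! i : Fin N, A t i j ≠ 0)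
    (hA : ∀ t : ℕ, 1 ≤ t → maxNorm (A t) ≤ 1 - ε)
    (hb : ∀ t : ℕ, 1 ≤ t → euclNorm (b t) ≤ B)
    (hx0 : euclNorm (x 0) ≤ B)
    (hrec : ∀ t : ℕ, x (t + 1) = (A (t + 1)).mulVec (x t) + b (t + 1)) :
    ∀ t : ℕ, euclNorm (x t) ≤ Real.sqrt N * B / ε := by
  obtain ⟨hε0, hε1⟩ := hε
  have hB : 0 ≤ B := (euclNorm_nonneg _).trans hx0
  have hinput : ∀ v : Fin N → ℂ, euclNorm v ≤ B → ∑ i, ‖v i‖ ≤ Real.sqrt N * B := fun v hv =>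
    (sum_norm_le_sqrt_mul_euclNorm v).trans (mul_le_mul_of_nonneg_left hv (Real.sqrt_nonneg _))
  have hstep (t : ℕ) : ∑ i, ‖x (t + 1) i‖ ≤ (1 - ε) * ∑ i, ‖x t i‖ + Real.sqrt N * B := by
    rw [hrec t]
    refine (sum_norm_add_le _ _).trans (add_le_add ?_ (hinput _ (hb _ t.succ_pos)))
    exact sum_norm_mulVec_le (fun j =>
      (sum_norm_col_le_maxNorm (hH _ t.succ_pos j)).trans (hA _ t.succ_pos)) _
  have hfixed : (1 - ε) * (Real.sqrt N * B / ε) + Real.sqrt N * B = Real.sqrt N * B / ε := by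
    field_simp; ring
  have hx0' : ∑ i, ‖x 0 i‖ ≤ Real.sqrt N * B / ε :=
    (hinput _ hx0).trans (le_div_self (by positivity) hε0 hε1)
  intro t
  exact (euclNorm_le_sum_norm _).trans
    (forall_le_of_le_mul_add (u := fun t => ∑ i, ‖x t i‖) (by linarith) hfixed.le hx0' hstep t)

/-- System stability under the PD parametrization.  Let `ε ∈ (0,1]`, `B ≥ 0`,
let `A t` (for `t ≥ 1`) be matrices in `H^{N×N}` (every column has exactly one
nonzero entry) with max-entry norm at most `1 - ε`, let `b t` (for `t ≥ 1`)
have Euclidean norm at most `B`, and let `‖x 0‖₂ ≤ B`.  If the state evolves by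
`x (t+1) = A (t+1) * x t + b (t+1)`, then `‖x t‖₂ ≤ √N * B / ε` for all `t`. -/
theorem pd_ssm_bibo_stable (N : ℕ) (ε B : ℝ) (hε : ε ∈ Set.Ioc (0 : ℝ) 1)
    (hB : 0 ≤ B)
    (A : ℕ → Matrix (Fin N) (Fin N) ℂ) (b : ℕ → Fin N → ℂ) (x : ℕ → Fin N → ℂ)
    (hH : ∀ t : ℕ, 1 ≤ t → ∀ j : Fin N, ∃! i : Fin N, A t i j ≠ 0)
    (hA : ∀ t : ℕ, 1 ≤ t → maxNorm (A t) ≤ 1 - ε)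
    (hb : ∀ t : ℕ, 1 ≤ t → euclNorm (b t) ≤ B)
    (hx0 : euclNorm (x 0) ≤ B)
    (hrec : ∀ t : ℕ, x (t + 1) = (A (t + 1)).mulVec (x t) + b (t + 1)) :
    ∀ t : ℕ, euclNorm (x t) ≤ Real.sqrt N * B / ε :=
  pd_ssm_bibo_stable_general N ε B hε A b x hH hA hb hx0 hrec
end

section
/- (Optimality of PD parametrization.) Let N ≥ 3. Consider the finite-state automaton on states Fin N with input alphabet Fin N whose transition under input c is f_c(i) = i + 1 (mod N) if i = c and f_c(i) = i otherwise. Then for every d ≤ N − 2 there do not exist an injective map v : Fin N → ℝ^d, matrices A_c ∈ ℝ^{d×d}, and vectors b_c ∈ ℝ^d (one pair for each c ∈ Fin N) such that A_c v_i + b_c = v_{f_c(i)} for all i, c ∈ Fin N. In other words, this N-state automaton cannot be emulated by any single-layer real state-space model with state size at most N − 2 under unique (injective) state encodings. -/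
/-!
Each update `x ↦ A c x + b c` is an affine map that fixes the encodings of all states other than
`c` and moves the encoding of `c` (since `c + 1 ≠ c` and the encoding is injective). An affine
relation among the encodings, pushed through the update for `c`, kills every term except the one
of `c`, so its coefficient vanishes: the `N` encodings are affinely independent, which in `ℝ^d`
forces `N ≤ d + 1`.
-/

open Finset

section

variable {k V P V₂ P₂ ι : Type*} [AddCommGroup V] [AddTorsor V P] [AddCommGroup V₂] [AddTorsor V₂ P₂]

theorem Finset.weightedVSub_comp_affineMap [Ring k] [Module k V] [Module k V₂]
    (s : Finset ι) (f : P →ᵃ[k] P₂) (p : ι → P) {w : ι → k} (hw : ∑ i ∈ s, w i = 0) :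
    s.weightedVSub (f ∘ p) w = f.linear (s.weightedVSub p w) := by
  obtain ⟨b⟩ := (inferInstance : AddTorsor V P).nonempty
  rw [s.weightedVSub_eq_weightedVSubOfPoint_of_sum_eq_zero w _ hw (f b),
    s.weightedVSub_eq_weightedVSubOfPoint_of_sum_eq_zero w _ hw b]
  simp [weightedVSubOfPoint_apply, map_sum, AffineMap.linearMap_vsub]

theorem affineIndependent_of_affineMap_moves_only [DivisionRing k] [Module k V] {p : ι → P}
    (f : ι → P →ᵃ[k] P) (hfix : ∀ i j, j ≠ i → f i (p j) = p j) (hmove : ∀ i, f i (p i) ≠ p i) :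
    AffineIndependent k p := by
  intro s w hw hp i hi
  have key : ∑ j ∈ s, w j • ((f i ∘ p) j -ᵥ p j) = w i • (f i (p i) -ᵥ p i) :=
    sum_eq_single i (fun j _ hji => by simp [hfix i j hji]) (absurd hi)
  rw [sum_smul_vsub_eq_weightedVSub_sub, s.weightedVSub_comp_affineMap (f i) p hw,
    hp, map_zero, sub_zero, eq_comm, smul_eq_zero] at key
  exact key.resolve_right (vsub_ne_zero.mpr (hmove i))

end

theorem Fin.add_one_ne_self {N : ℕ} [NeZero N] (hN : 2 ≤ N) (i : Fin N) : i + 1 ≠ i := by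
  have : Nontrivial (Fin N) := Fin.nontrivial_iff_two_le.mpr hN
  simp only [ne_eq, add_eq_left, one_eq_zero_iff]
  omega

/-- Optimality of the PD parametrization.  For `N ≥ 3`, consider the FSA on
states `Fin N` with input alphabet `Fin N` whose transition under input `c`
maps `i` to `i + 1 (mod N)` if `i = c` and fixes `i` otherwise.  Then for any
`d ≤ N - 2`, there is no injective state encoding `v : Fin N → ℝ^d` together
with matrices `A c` and vectors `b c` such that the affine update
`x ↦ A c * x + b c` maps each state encoding to the encoding of its successor.
That is, this `N`-state automaton cannot be emulated by a single-layer real SSM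
with state size at most `N - 2` under unique state encodings. -/
theorem pd_parametrization_optimal (N : ℕ) [NeZero N] (hN : 3 ≤ N)
    (d : ℕ) (hd : d ≤ N - 2) :
    ¬ ∃ (v : Fin N → (Fin d → ℝ)) (A : Fin N → Matrix (Fin d) (Fin d) ℝ)
        (b : Fin N → (Fin d → ℝ)),
      Function.Injective v ∧
      ∀ c i : Fin N,
        (A c).mulVec (v i) + b c = v (if i = c then i + 1 else i) := by
  rintro ⟨v, A, b, hinj, h⟩
  let f c : (Fin d → ℝ) →ᵃ[ℝ] (Fin d → ℝ) :=
    (Matrix.toLin' (A c)).toAffineMap + AffineMap.const ℝ _ (b c)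
  have hf c x : f c x = (A c).mulVec x + b c := rfl
  have hindep : AffineIndependent ℝ v := by
    refine affineIndependent_of_affineMap_moves_only f (fun c i hic => ?_) (fun c => ?_)
    · simpa [hf, hic] using h c i
    · simpa [hf, h c c] using hinj.ne (Fin.add_one_ne_self (by omega) c)
  have hcard : N ≤ d + 1 := calc
    N = Fintype.card (Fin N) := (Fintype.card_fin N).symm
    _ ≤ Module.finrank ℝ (vectorSpan ℝ (Set.range v)) + 1 := hindep.card_le_finrank_succ
    _ ≤ d + 1 := by
      grw [Submodule.finrank_le, Module.finrank_fin_fun]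
  omega
end

section
/- (Arbitrary precision and readout: injectivity of the scalar encoding.) Let p_t denote the t-th prime number and let k_t = √(p_t). Consider the scalar recurrence x_t = x_{t−1} + u_t·k_t started at any x_0 ∈ ℝ, where u_t ∈ ℚ are rational input encodings, so that after n steps x_n = x_0 + Σ_{t=1}^n u_t √(p_t). Then the map from finitely supported rational sequences to real numbers, (u_t)_t ↦ Σ_t u_t √(p_t), is injective: if u, v : ℕ → ℚ are finitely supported and u ≠ v, then x_0 + Σ_t u_t √(p_t) ≠ x_0 + Σ_t v_t √(p_t). In particular, no two differing finite input sequences produce the same state, so any FSA can be encoded into this scalar-valued SSM under an appropriate lookup table as readout. -/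
/-!
Every element of a quadratic extension `K(√p)` is `a + b√p` with `a, b ∈ K`; squaring
`√d = a + b√p` puts `2ab√p` in `K`, so if `√p ∉ K` then `ab = 0`, i.e. `√d ∈ K` or
`√(pd) ∈ K`. By induction on a finite set `S` of primes this shows `√d ∉ ℚ(√q : q ∈ S)`
for every squarefree `d ≠ 1` prime to `S`. A nontrivial rational relation among square roots
of primes would put one of them in the field generated by the others, so they are linearly
independent over `ℚ`.
-/

open IntermediateField

namespace IntermediateField

variable {F E : Type*} [Field F] [Field E] [Algebra F E]

theorem exists_eq_add_mul_of_mem_adjoin_simple_of_sq_eq {α x : E} {c : F}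
    (hα : α ^ 2 = algebraMap F E c) (hx : x ∈ F⟮α⟯) :
    ∃ a b : F, x = algebraMap F E a + algebraMap F E b * α := by
  have hint : IsIntegral F α := .of_pow two_pos (hα ▸ isIntegral_algebraMap)
  rw [← mem_toSubalgebra, adjoin_simple_toSubalgebra_of_isAlgebraic hint.isAlgebraic] at hx
  induction hx using Algebra.adjoin_induction with
  | mem y hy => exact ⟨0, 1, by rw [Set.mem_singleton_iff.mp hy]; simp⟩
  | algebraMap r => exact ⟨r, 0, by simp⟩
  | add y z _ _ hy hz =>
    obtain ⟨a, b, rfl⟩ := hy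
    obtain ⟨a', b', rfl⟩ := hz
    exact ⟨a + a', b + b', by simp only [map_add]; ring⟩
  | mul y z _ _ hy hz =>
    obtain ⟨a, b, rfl⟩ := hy
    obtain ⟨a', b', rfl⟩ := hz
    refine ⟨a * a' + b * b' * c, a * b' + b * a', ?_⟩
    simp only [map_add, map_mul]
    linear_combination (algebraMap F E b * algebraMap F E b') * hα

theorem mem_range_or_mul_mem_range_of_mem_adjoin_simple_of_sq_eq [NeZero (2 : F)] {α β : E}
    {c e : F} (hα : α ^ 2 = algebraMap F E c) (hβ : β ^ 2 = algebraMap F E e)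
    (hβα : β ∈ F⟮α⟯) (hαF : α ∉ Set.range (algebraMap F E)) :
    β ∈ Set.range (algebraMap F E) ∨ α * β ∈ Set.range (algebraMap F E) := by
  obtain ⟨a, b, rfl⟩ := exists_eq_add_mul_of_mem_adjoin_simple_of_sq_eq hα hβα
  have hab : a * b = 0 := by
    by_contra hab
    refine hαF ⟨(e - a ^ 2 - b ^ 2 * c) / (2 * a * b), ?_⟩
    have h2ab : algebraMap F E (2 * a * b) ≠ 0 :=
      (map_ne_zero _).mpr (by rw [mul_assoc]; exact mul_ne_zero two_ne_zero hab)
    rw [map_div₀, div_eq_iff h2ab]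
    simp only [map_sub, map_mul, map_pow, map_ofNat, ← hβ]
    linear_combination (algebraMap F E b) ^ 2 * hα
  rcases mul_eq_zero.mp hab with rfl | rfl
  · exact Or.inr ⟨b * c, by simp only [map_mul, map_zero, zero_add, ← hα]; ring⟩
  · exact Or.inl ⟨a, by simp⟩

end IntermediateField

theorem irrational_sqrt_natCast_of_squarefree {d : ℕ} (hd : Squarefree d) (hd1 : d ≠ 1) :
    Irrational √(d : ℝ) := by
  refine irrational_sqrt_natCast_iff.mpr ?_
  rintro ⟨r, hr⟩
  obtain rfl : r = 1 := Nat.isUnit_iff.mp (hd r (hr ▸ dvd_rfl))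
  exact hd1 hr

theorem sqrt_notMem_adjoin_sqrt_finset (s : Finset ℕ) (hs : ∀ p ∈ s, p.Prime) {d : ℕ}
    (hd : Squarefree d) (hd1 : d ≠ 1) (hds : ∀ p ∈ s, ¬p ∣ d) :
    √(d : ℝ) ∉ adjoin ℚ ((fun n : ℕ => √(n : ℝ)) '' s) := by
  induction s using Finset.induction_on generalizing d with
  | empty =>
    rw [Finset.coe_empty, Set.image_empty, adjoin_empty, mem_bot]
    rintro ⟨q, hq⟩
    exact irrational_sqrt_natCast_of_squarefree hd hd1 ⟨q, hq⟩
  | insert p s hps ih =>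
    set K := adjoin ℚ ((fun n : ℕ => √(n : ℝ)) '' s)
    have hp : p.Prime := hs p (Finset.mem_insert_self p s)
    have hsP : ∀ q ∈ s, q.Prime := fun q hq => hs q (Finset.mem_insert_of_mem hq)
    have hsp : ∀ q ∈ s, ¬q ∣ p := fun q hq hqp =>
      hps (((Nat.prime_dvd_prime_iff_eq (hsP q hq) hp).mp hqp) ▸ hq)
    have hsd : ∀ q ∈ s, ¬q ∣ d := fun q hq => hds q (Finset.mem_insert_of_mem hq)
    have hsqrt (n : ℕ) : √(n : ℝ) ^ 2 = algebraMap K ℝ (n : K) := by simp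
    have hpK : √(p : ℝ) ∉ Set.range (algebraMap K ℝ) := fun ⟨y, hy⟩ =>
      ih hsP hp.prime.squarefree hp.one_lt.ne' hsp (hy ▸ y.2)
    intro hd_mem
    have hdK : √(d : ℝ) ∈ K⟮√(p : ℝ)⟯ := by
      have h : √(d : ℝ) ∈ adjoin ℚ ((K : Set ℝ) ∪ {√(p : ℝ)}) := by
        refine adjoin.mono ℚ _ _ ?_ hd_mem
        rw [Finset.coe_insert, Set.image_insert_eq]
        exact Set.insert_subset (Or.inr rfl) ((subset_adjoin ℚ _).trans Set.subset_union_left)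
      rw [← restrictScalars_adjoin] at h
      exact h
    rcases mem_range_or_mul_mem_range_of_mem_adjoin_simple_of_sq_eq (hsqrt p) (hsqrt d) hdK hpK
      with ⟨y, hy⟩ | ⟨y, hy⟩
    · exact ih hsP hd hd1 hsd (hy ▸ y.2)
    · have hpd : p.Coprime d := hp.coprime_iff_not_dvd.mpr (hds p (Finset.mem_insert_self p s))
      refine ih hsP (d := p * d) ((Nat.squarefree_mul hpd).mpr ⟨hp.prime.squarefree, hd⟩)
        (fun h => hp.one_lt.ne' (Nat.eq_one_of_mul_eq_one_right h))
        (fun q hq hqpd => ((hsP q hq).dvd_mul.mp hqpd).elim (hsp q hq) (hsd q hq)) ?_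
      rw [Nat.cast_mul, Real.sqrt_mul (Nat.cast_nonneg p), ← hy]
      exact y.2

theorem sqrt_notMem_adjoin_sqrt (S : Set ℕ) (hS : ∀ p ∈ S, p.Prime) {d : ℕ}
    (hd : Squarefree d) (hd1 : d ≠ 1) (hdS : ∀ p ∈ S, ¬p ∣ d) :
    √(d : ℝ) ∉ adjoin ℚ ((fun n : ℕ => √(n : ℝ)) '' S) := by
  classical
  intro h
  obtain ⟨T, hTS, hT⟩ := exists_finset_of_mem_adjoin h
  obtain ⟨s, hsS, rfl⟩ := Finset.subset_set_image_iff.mp hTS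
  rw [Finset.coe_image] at hT
  exact sqrt_notMem_adjoin_sqrt_finset s (fun p hp => hS p (hsS hp)) hd hd1
    (fun p hp => hdS p (hsS hp)) hT

theorem linearIndependent_sqrt_prime :
    LinearIndependent ℚ (fun p : {p : ℕ // p.Prime} => √(p : ℝ)) := by
  refine linearIndependent_iff_notMem_span.mpr fun ⟨p, hp⟩ hspan => ?_
  refine sqrt_notMem_adjoin_sqrt {q | q.Prime ∧ q ≠ p} (fun q hq => hq.1) hp.prime.squarefree
    hp.one_lt.ne' (fun q hq hqp => hq.2 ((Nat.prime_dvd_prime_iff_eq hq.1 hp).mp hqp)) ?_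
  refine (Submodule.span_le (p := (adjoin ℚ _).toSubalgebra.toSubmodule)).mpr ?_ hspan
  rintro _ ⟨⟨q, hq⟩, hqp, rfl⟩
  exact subset_adjoin ℚ _ ⟨q, ⟨hq, fun h => hqp.2 (Subtype.ext h)⟩, rfl⟩

/-- Arbitrary precision and readout: injectivity of the scalar encoding.
Let `p t` be the `t`-th prime (`Nat.nth Nat.Prime t`) and consider the scalar
recurrence `x_t = x_{t-1} + u_t * √(p t)` started at `x₀`, with rational input
encodings `u_t`, whose final state after processing a finitely supported input
sequence `u` is `x₀ + ∑_t u_t √(p t)`.  Then two differing finitely supported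
rational input sequences never produce the same state: the map
`u ↦ ∑_t u_t √(p t)` is injective. -/
theorem sqrt_prime_encoding_injective (x₀ : ℝ) (u v : ℕ →₀ ℚ) (huv : u ≠ v) :
    x₀ + (u.sum fun t q => (q : ℝ) * Real.sqrt (Nat.nth Nat.Prime t)) ≠
      x₀ + (v.sum fun t q => (q : ℝ) * Real.sqrt (Nat.nth Nat.Prime t)) := by
  have hli : LinearIndependent ℚ (fun t => √(Nat.nth Nat.Prime t : ℝ)) :=
    linearIndependent_sqrt_prime.comp (fun t => ⟨_, Nat.prime_nth_prime t⟩)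
      fun _ _ h => Nat.nth_injective Nat.infinite_setOfPred_prime (congrArg Subtype.val h)
  intro h
  refine huv (hli ?_)
  simpa [Finsupp.linearCombination_apply, Rat.smul_def] using add_left_cancel h
end
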